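/- In the 2-category F(X,h) constructed from an L-algebra (X,h), horizontal composition decomposes via whiskering in both orders: for 2-cells α : M ⟶ M' : A → B and β : N ⟶ N' : B → C, one has (β ∘ id_M) ; (id_{N'} ∘ α) = β ∘ α = (id_N ∘ α) ; (β ∘ id_{M'}). -/

import Mathlib

/-! Syntax of the 2-λ-calculus over a 2-signature, following
"Cartesian closed 2-categories and permutation equivalence in
higher-order rewriting". -/

/-- Simple types over a set `S` of sorts: `A ::= s | 1 | A × B | B^A`
(`arr A B` denotes `B^A`). -/
inductive Ty (S : Type) : Type
  | base (s : S)
  | unit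
  | prod (A B : Ty S)
  | arr (A B : Ty S)

/-- A 1-signature over a fixed set `S` of sorts: operations with arities. -/
structure Sig1 (S : Type) : Type 1 where
  Op : Type
  opCtx : Op → List (Ty S)
  opTy : Op → Ty S

variable {S : Type}

/-- Raw λ-terms (de Bruijn indices) over a 1-signature.  Constant
application `const c args` applies an operation to a tuple of terms
(indices `≥ arity` are ignored by the typing rules). -/
inductive Tm (Sg : Sig1 S) : Type
  | var (n : ℕ)
  | unit
  | pair (M N : Tm Sg)
  | fst (M : Tm Sg)
  | snd (M : Tm Sg)
  | lam (A : Ty S) (M : Tm Sg)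
  | app (M N : Tm Sg)
  | const (c : Sg.Op) (args : ℕ → Tm Sg)

namespace Tm

variable {Sg : Sig1 S}

/-- Lift a renaming under a binder. -/
def liftRen (f : ℕ → ℕ) : ℕ → ℕ
  | 0 => 0
  | n + 1 => f n + 1

/-- Renaming of variables. -/
def ren (f : ℕ → ℕ) : Tm Sg → Tm Sg
  | var n => var (f n)
  | unit => unit
  | pair M N => pair (M.ren f) (N.ren f)
  | fst M => fst (M.ren f)
  | snd M => snd (M.ren f)
  | lam A M => lam A (M.ren (liftRen f))
  | app M N => app (M.ren f) (N.ren f)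
  | const c a => const c (fun i => (a i).ren f)

/-- Lift a simultaneous substitution under a binder. -/
def liftSub (σ : ℕ → Tm Sg) : ℕ → Tm Sg
  | 0 => var 0
  | n + 1 => (σ n).ren Nat.succ

/-- Simultaneous substitution. -/
def sub (σ : ℕ → Tm Sg) : Tm Sg → Tm Sg
  | var n => σ n
  | unit => unit
  | pair M N => pair (M.sub σ) (N.sub σ)
  | fst M => fst (M.sub σ)
  | snd M => snd (M.sub σ)
  | lam A M => lam A (M.sub (liftSub σ))
  | app M N => app (M.sub σ) (N.sub σ)
  | const c a => const c (fun i => (a i).sub σ)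

/-- Extension of a substitution by a term (for substituting a single
variable). -/
def cons (M : Tm Sg) (σ : ℕ → Tm Sg) : ℕ → Tm Sg
  | 0 => M
  | n + 1 => σ n

end Tm

/-- Typing judgement `Γ ⊢ M : A` for λ-terms. -/
inductive HasTy (Sg : Sig1 S) : List (Ty S) → Tm Sg → Ty S → Prop
  | var {Γ : List (Ty S)} {n : ℕ} (h : n < Γ.length) :
      HasTy Sg Γ (.var n) (Γ.get ⟨n, h⟩)
  | unit {Γ} : HasTy Sg Γ .unit .unit
  | pair {Γ M N A B} : HasTy Sg Γ M A → HasTy Sg Γ N B →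
      HasTy Sg Γ (.pair M N) (.prod A B)
  | fst {Γ M A B} : HasTy Sg Γ M (.prod A B) → HasTy Sg Γ (.fst M) A
  | snd {Γ M A B} : HasTy Sg Γ M (.prod A B) → HasTy Sg Γ (.snd M) B
  | lam {Γ M A B} : HasTy Sg (A :: Γ) M B → HasTy Sg Γ (.lam A M) (.arr A B)
  | app {Γ M N A B} : HasTy Sg Γ M (.arr A B) → HasTy Sg Γ N A →
      HasTy Sg Γ (.app M N) B
  | const {Γ} {c : Sg.Op} {args : ℕ → Tm Sg}
      (h : ∀ i (hi : i < (Sg.opCtx c).length),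
        HasTy Sg Γ (args i) ((Sg.opCtx c).get ⟨i, hi⟩)) :
      HasTy Sg Γ (.const c args) (Sg.opTy c)

/-- βη-equivalence of well-typed λ-terms. -/
inductive Beq (Sg : Sig1 S) : List (Ty S) → Tm Sg → Tm Sg → Ty S → Prop
  | refl {Γ M A} : HasTy Sg Γ M A → Beq Sg Γ M M A
  | symm {Γ M N A} : Beq Sg Γ M N A → Beq Sg Γ N M A
  | trans {Γ M N P A} : Beq Sg Γ M N A → Beq Sg Γ N P A → Beq Sg Γ M P A
  | pairCong {Γ M M' N N' A B} : Beq Sg Γ M M' A → Beq Sg Γ N N' B →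
      Beq Sg Γ (.pair M N) (.pair M' N') (.prod A B)
  | fstCong {Γ M M' A B} : Beq Sg Γ M M' (.prod A B) →
      Beq Sg Γ (.fst M) (.fst M') A
  | sndCong {Γ M M' A B} : Beq Sg Γ M M' (.prod A B) →
      Beq Sg Γ (.snd M) (.snd M') B
  | lamCong {Γ M M' A B} : Beq Sg (A :: Γ) M M' B →
      Beq Sg Γ (.lam A M) (.lam A M') (.arr A B)
  | appCong {Γ M M' N N' A B} : Beq Sg Γ M M' (.arr A B) → Beq Sg Γ N N' A →
      Beq Sg Γ (.app M N) (.app M' N') B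
  | constCong {Γ} {c : Sg.Op} {args args' : ℕ → Tm Sg}
      (h : ∀ i (hi : i < (Sg.opCtx c).length),
        Beq Sg Γ (args i) (args' i) ((Sg.opCtx c).get ⟨i, hi⟩)) :
      Beq Sg Γ (.const c args) (.const c args') (Sg.opTy c)
  | beta {Γ M N A B} : HasTy Sg (A :: Γ) M B → HasTy Sg Γ N A →
      Beq Sg Γ (.app (.lam A M) N) (M.sub (Tm.cons N .var)) B
  | eta {Γ M A B} : HasTy Sg Γ M (.arr A B) →
      Beq Sg Γ M (.lam A (.app (M.ren Nat.succ) (.var 0))) (.arr A B)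
  | prodBeta1 {Γ M N A B} : HasTy Sg Γ M A → HasTy Sg Γ N B →
      Beq Sg Γ (.fst (.pair M N)) M A
  | prodBeta2 {Γ M N A B} : HasTy Sg Γ M A → HasTy Sg Γ N B →
      Beq Sg Γ (.snd (.pair M N)) N B
  | prodEta {Γ M A B} : HasTy Sg Γ M (.prod A B) →
      Beq Sg Γ M (.pair (.fst M) (.snd M)) (.prod A B)
  | unitEta {Γ M} : HasTy Sg Γ M .unit → Beq Sg Γ M .unit .unit

/-- A 2-signature: a 1-signature together with a set of reduction rules
between parallel terms. -/
structure Sig2 (S : Type) : Type 1 where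
  sig : Sig1 S
  Rule : Type
  ruleCtx : Rule → List (Ty S)
  ruleTy : Rule → Ty S
  lhs : Rule → Tm sig
  rhs : Rule → Tm sig

/-- Raw reduction terms ("proof terms") over a 1-signature `Sg` and a set `R`
of reduction-rule names.  `vcomp P M Q` is the vertical composite
`P ;_M Q`. -/
inductive Rd (Sg : Sig1 S) (R : Type) : Type
  | var (n : ℕ)
  | unit
  | pair (P Q : Rd Sg R)
  | fst (P : Rd Sg R)
  | snd (P : Rd Sg R)
  | lam (A : Ty S) (P : Rd Sg R)
  | app (P Q : Rd Sg R)
  | const (c : Sg.Op) (args : ℕ → Rd Sg R)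
  | rule (r : R) (args : ℕ → Rd Sg R)
  | vcomp (P : Rd Sg R) (M : Tm Sg) (Q : Rd Sg R)

namespace Rd

variable {Sg : Sig1 S} {R R' : Type}

/-- Every term is an identity reduction on itself. -/
def toRd : Tm Sg → Rd Sg R
  | .var n => var n
  | .unit => unit
  | .pair M N => pair (toRd M) (toRd N)
  | .fst M => fst (toRd M)
  | .snd M => snd (toRd M)
  | .lam A M => lam A (toRd M)
  | .app M N => app (toRd M) (toRd N)
  | .const c a => const c (fun i => toRd (a i))

/-- Renaming of variables in reductions. -/
def ren (f : ℕ → ℕ) : Rd Sg R → Rd Sg R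
  | var n => var (f n)
  | unit => unit
  | pair P Q => pair (P.ren f) (Q.ren f)
  | fst P => fst (P.ren f)
  | snd P => snd (P.ren f)
  | lam A P => lam A (P.ren (Tm.liftRen f))
  | app P Q => app (P.ren f) (Q.ren f)
  | const c a => const c (fun i => (a i).ren f)
  | rule r a => rule r (fun i => (a i).ren f)
  | vcomp P M Q => vcomp (P.ren f) (M.ren f) (Q.ren f)

/-- Relabelling of rule names in a reduction. -/
def mapRule (g : R → R') : Rd Sg R → Rd Sg R'
  | var n => var n
  | unit => unit
  | pair P Q => pair (P.mapRule g) (Q.mapRule g)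
  | fst P => fst (P.mapRule g)
  | snd P => snd (P.mapRule g)
  | lam A P => lam A (P.mapRule g)
  | app P Q => app (P.mapRule g) (Q.mapRule g)
  | const c a => const c (fun i => (a i).mapRule g)
  | rule r a => rule (g r) (fun i => (a i).mapRule g)
  | vcomp P M Q => vcomp (P.mapRule g) M (Q.mapRule g)

/-- Lift a tuple of reductions under a binder. -/
def liftRd (Q : ℕ → Rd Sg R) : ℕ → Rd Sg R
  | 0 => var 0
  | n + 1 => (Q n).ren Nat.succ

/-- Extension of a tuple of reductions by a reduction. -/
def consRd (P : Rd Sg R) (τ : ℕ → Rd Sg R) : ℕ → Rd Sg R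
  | 0 => P
  | n + 1 => τ n

end Rd

/-- Left whiskering `M[Q]` of a term `M` by a tuple of reductions `Q`. -/
def lw {Sg : Sig1 S} {R : Type} (Q : ℕ → Rd Sg R) : Tm Sg → Rd Sg R
  | .var n => Q n
  | .unit => .unit
  | .pair M N => .pair (lw Q M) (lw Q N)
  | .fst M => .fst (lw Q M)
  | .snd M => .snd (lw Q M)
  | .lam A M => .lam A (lw (Rd.liftRd Q) M)
  | .app M N => .app (lw Q M) (lw Q N)
  | .const c a => .const c (fun i => lw Q (a i))

/-- Right whiskering `P[N]` of a reduction `P` by a tuple of terms `N`. -/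
def rw {Sg : Sig1 S} {R : Type} (N : ℕ → Tm Sg) : Rd Sg R → Rd Sg R
  | .var n => Rd.toRd (N n)
  | .unit => .unit
  | .pair P Q => .pair (rw N P) (rw N Q)
  | .fst P => .fst (rw N P)
  | .snd P => .snd (rw N P)
  | .lam A P => .lam A (rw (Tm.liftSub N) P)
  | .app P Q => .app (rw N P) (rw N Q)
  | .const c a => .const c (fun i => rw N (a i))
  | .rule r a => .rule r (fun i => rw N (a i))
  | .vcomp P M Q => .vcomp (rw N P) (M.sub N) (rw N Q)

/-- Substitution of a tuple of reductions `Q : N ⟶ N'` into a reduction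
`P : M ⟶ M'`, defined as `P[N] ;_{M'[N]} M'[Q]`. -/
def rdSub {Sg : Sig1 S} {R : Type} (P : Rd Sg R) (N : ℕ → Tm Sg) (M' : Tm Sg)
    (Q : ℕ → Rd Sg R) : Rd Sg R :=
  .vcomp (rw N P) (M'.sub N) (lw Q M')

/-- The typing judgement `Γ ⊢ P : M ⟶ N : A` for reductions. -/
inductive RdJ (X : Sig2 S) : List (Ty S) → Rd X.sig X.Rule → Tm X.sig → Tm X.sig → Ty S → Prop
  | rule {Γ} {r : X.Rule} {args : ℕ → Rd X.sig X.Rule} {Ms Ns : ℕ → Tm X.sig}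
      (h : ∀ i (hi : i < (X.ruleCtx r).length),
        RdJ X Γ (args i) (Ms i) (Ns i) ((X.ruleCtx r).get ⟨i, hi⟩)) :
      RdJ X Γ (.rule r args) ((X.lhs r).sub Ms) ((X.rhs r).sub Ns) (X.ruleTy r)
  | vcomp {Γ P Q M₁ M₂ M₃ A} : RdJ X Γ P M₁ M₂ A → RdJ X Γ Q M₂ M₃ A →
      RdJ X Γ (.vcomp P M₂ Q) M₁ M₃ A
  | var {Γ : List (Ty S)} {n : ℕ} (h : n < Γ.length) :
      RdJ X Γ (.var n) (.var n) (.var n) (Γ.get ⟨n, h⟩)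
  | unit {Γ} : RdJ X Γ .unit .unit .unit .unit
  | const {Γ} {c : X.sig.Op} {args : ℕ → Rd X.sig X.Rule} {Ms Ns : ℕ → Tm X.sig}
      (h : ∀ i (hi : i < (X.sig.opCtx c).length),
        RdJ X Γ (args i) (Ms i) (Ns i) ((X.sig.opCtx c).get ⟨i, hi⟩)) :
      RdJ X Γ (.const c args) (.const c Ms) (.const c Ns) (X.sig.opTy c)
  | lam {Γ P M N A B} : RdJ X (A :: Γ) P M N B →
      RdJ X Γ (.lam A P) (.lam A M) (.lam A N) (.arr A B)
  | app {Γ P Q M M' N N' A B} : RdJ X Γ P M M' (.arr A B) → RdJ X Γ Q N N' A →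
      RdJ X Γ (.app P Q) (.app M N) (.app M' N') B
  | pair {Γ P Q M M' N N' A B} : RdJ X Γ P M M' A → RdJ X Γ Q N N' B →
      RdJ X Γ (.pair P Q) (.pair M N) (.pair M' N') (.prod A B)
  | fst {Γ P M N A B} : RdJ X Γ P M N (.prod A B) →
      RdJ X Γ (.fst P) (.fst M) (.fst N) A
  | snd {Γ P M N A B} : RdJ X Γ P M N (.prod A B) →
      RdJ X Γ (.snd P) (.snd M) (.snd N) B
  | conv {Γ P M N M' N' A} : RdJ X Γ P M N A → Beq X.sig Γ M M' A →
      Beq X.sig Γ N N' A → RdJ X Γ P M' N' A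
/-- Permutation equivalence `Γ ⊢ P ≡ Q : M ⟶ N : A` on reductions:
the congruence generated by the category laws for vertical composition,
β/η-rules at the level of reductions, and the lifting rules. -/
inductive PEq (X : Sig2 S) : List (Ty S) → Rd X.sig X.Rule → Rd X.sig X.Rule → Tm X.sig → Tm X.sig → Ty S → Prop
  -- congruence rules
  | refl {Γ P M N A} : RdJ X Γ P M N A → PEq X Γ P P M N A
  | symm {Γ P Q M N A} : PEq X Γ P Q M N A → PEq X Γ Q P M N A
  | trans {Γ P Q R₀ M N A} : PEq X Γ P Q M N A → PEq X Γ Q R₀ M N A →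
      PEq X Γ P R₀ M N A
  | vcompCong {Γ P P' Q Q' M₁ M₂ M₃ A} : PEq X Γ P P' M₁ M₂ A →
      PEq X Γ Q Q' M₂ M₃ A →
      PEq X Γ (.vcomp P M₂ Q) (.vcomp P' M₂ Q') M₁ M₃ A
  | ruleCong {Γ} {r : X.Rule} {P Q : ℕ → Rd X.sig X.Rule} {Ms Ns : ℕ → Tm X.sig}
      (h : ∀ i (hi : i < (X.ruleCtx r).length),
        PEq X Γ (P i) (Q i) (Ms i) (Ns i) ((X.ruleCtx r).get ⟨i, hi⟩)) :
      PEq X Γ (.rule r P) (.rule r Q) ((X.lhs r).sub Ms) ((X.rhs r).sub Ns) (X.ruleTy r)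
  | constCong {Γ} {c : X.sig.Op} {P Q : ℕ → Rd X.sig X.Rule} {Ms Ns : ℕ → Tm X.sig}
      (h : ∀ i (hi : i < (X.sig.opCtx c).length),
        PEq X Γ (P i) (Q i) (Ms i) (Ns i) ((X.sig.opCtx c).get ⟨i, hi⟩)) :
      PEq X Γ (.const c P) (.const c Q) (.const c Ms) (.const c Ns) (X.sig.opTy c)
  | lamCong {Γ P Q M N A B} : PEq X (A :: Γ) P Q M N B →
      PEq X Γ (.lam A P) (.lam A Q) (.lam A M) (.lam A N) (.arr A B)
  | appCong {Γ P P' Q Q' M M' N N' A B} : PEq X Γ P P' M M' (.arr A B) →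
      PEq X Γ Q Q' N N' A →
      PEq X Γ (.app P Q) (.app P' Q') (.app M N) (.app M' N') B
  | pairCong {Γ P P' Q Q' M M' N N' A B} : PEq X Γ P P' M M' A →
      PEq X Γ Q Q' N N' B →
      PEq X Γ (.pair P Q) (.pair P' Q') (.pair M N) (.pair M' N') (.prod A B)
  | fstCong {Γ P Q M N A B} : PEq X Γ P Q M N (.prod A B) →
      PEq X Γ (.fst P) (.fst Q) (.fst M) (.fst N) A
  | sndCong {Γ P Q M N A B} : PEq X Γ P Q M N (.prod A B) →
      PEq X Γ (.snd P) (.snd Q) (.snd M) (.snd N) B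
  -- category rules
  | assoc {Γ P₁ P₂ P₃ M₁ M₂ M₃ M₄ A} : RdJ X Γ P₁ M₁ M₂ A → RdJ X Γ P₂ M₂ M₃ A →
      RdJ X Γ P₃ M₃ M₄ A →
      PEq X Γ (.vcomp P₁ M₂ (.vcomp P₂ M₃ P₃)) (.vcomp (.vcomp P₁ M₂ P₂) M₃ P₃) M₁ M₄ A
  | unitR {Γ P M N A} : RdJ X Γ P M N A →
      PEq X Γ (.vcomp P N (Rd.toRd N)) P M N A
  | unitL {Γ P M N A} : RdJ X Γ P M N A →
      PEq X Γ (.vcomp (Rd.toRd M) M P) P M N A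
  -- beta and eta rules
  | beta {Γ P Q M M' N N' A B} : RdJ X (A :: Γ) P M M' B → RdJ X Γ Q N N' A →
      PEq X Γ (.app (.lam A P) Q)
        (rdSub P (Tm.cons N Tm.var) M' (Rd.consRd Q (fun n => Rd.var n)))
        (.app (.lam A M) N) (M'.sub (Tm.cons N' Tm.var)) B
  | eta {Γ P M N A B} : RdJ X Γ P M N (.arr A B) →
      PEq X Γ P (.lam A (.app (P.ren Nat.succ) (.var 0))) M N (.arr A B)
  | fstPair {Γ P Q M₁ M₂ N₁ N₂ A B} : RdJ X Γ P M₁ M₂ A → RdJ X Γ Q N₁ N₂ B →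
      PEq X Γ (.fst (.pair P Q)) P (.fst (.pair M₁ N₁)) M₂ A
  | sndPair {Γ P Q M₁ M₂ N₁ N₂ A B} : RdJ X Γ P M₁ M₂ A → RdJ X Γ Q N₁ N₂ B →
      PEq X Γ (.snd (.pair P Q)) Q (.snd (.pair M₁ N₁)) N₂ B
  | pairEta {Γ P M₁ M₂ N₁ N₂ A B} : RdJ X Γ P (.pair M₁ N₁) (.pair M₂ N₂) (.prod A B) →
      PEq X Γ P (.pair (.fst P) (.snd P)) (.pair M₁ N₁) (.pair M₂ N₂) (.prod A B)
  | unitEta {Γ P M N} : RdJ X Γ P M N .unit → PEq X Γ P .unit M N .unit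
  -- lifting rules
  | ruleLift1 {Δ} {r : X.Rule} {P Q : ℕ → Rd X.sig X.Rule} {N₁ N₂ N₃ : ℕ → Tm X.sig}
      (hP : ∀ i (hi : i < (X.ruleCtx r).length),
        RdJ X Δ (P i) (N₁ i) (N₂ i) ((X.ruleCtx r).get ⟨i, hi⟩))
      (hQ : ∀ i (hi : i < (X.ruleCtx r).length),
        RdJ X Δ (Q i) (N₂ i) (N₃ i) ((X.ruleCtx r).get ⟨i, hi⟩)) :
      PEq X Δ (.rule r (fun i => .vcomp (P i) (N₂ i) (Q i)))
        (.vcomp (lw P (X.lhs r)) ((X.lhs r).sub N₂) (.rule r Q))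
        ((X.lhs r).sub N₁) ((X.rhs r).sub N₃) (X.ruleTy r)
  | ruleLift2 {Δ} {r : X.Rule} {P Q : ℕ → Rd X.sig X.Rule} {N₁ N₂ N₃ : ℕ → Tm X.sig}
      (hP : ∀ i (hi : i < (X.ruleCtx r).length),
        RdJ X Δ (P i) (N₁ i) (N₂ i) ((X.ruleCtx r).get ⟨i, hi⟩))
      (hQ : ∀ i (hi : i < (X.ruleCtx r).length),
        RdJ X Δ (Q i) (N₂ i) (N₃ i) ((X.ruleCtx r).get ⟨i, hi⟩)) :
      PEq X Δ (.rule r (fun i => .vcomp (P i) (N₂ i) (Q i)))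
        (.vcomp (.rule r P) ((X.rhs r).sub N₂) (lw Q (X.rhs r)))
        ((X.lhs r).sub N₁) ((X.rhs r).sub N₃) (X.ruleTy r)
  | constLift {Γ} {c : X.sig.Op} {P Q : ℕ → Rd X.sig X.Rule} {M₁ M₂ M₃ : ℕ → Tm X.sig}
      (hP : ∀ i (hi : i < (X.sig.opCtx c).length),
        RdJ X Γ (P i) (M₁ i) (M₂ i) ((X.sig.opCtx c).get ⟨i, hi⟩))
      (hQ : ∀ i (hi : i < (X.sig.opCtx c).length),
        RdJ X Γ (Q i) (M₂ i) (M₃ i) ((X.sig.opCtx c).get ⟨i, hi⟩)) :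
      PEq X Γ (.const c (fun i => .vcomp (P i) (M₂ i) (Q i)))
        (.vcomp (.const c P) (.const c M₂) (.const c Q))
        (.const c M₁) (.const c M₃) (X.sig.opTy c)
  | lamLift {Γ P Q M₁ M₂ M₃ A B} : RdJ X (A :: Γ) P M₁ M₂ B →
      RdJ X (A :: Γ) Q M₂ M₃ B →
      PEq X Γ (.lam A (.vcomp P M₂ Q))
        (.vcomp (.lam A P) (.lam A M₂) (.lam A Q))
        (.lam A M₁) (.lam A M₃) (.arr A B)
  | appLift {Γ P P' Q Q' M₁ M₂ M₃ N₁ N₂ N₃ A B} :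
      RdJ X Γ P M₁ M₂ (.arr A B) → RdJ X Γ P' M₂ M₃ (.arr A B) →
      RdJ X Γ Q N₁ N₂ A → RdJ X Γ Q' N₂ N₃ A →
      PEq X Γ (.app (.vcomp P M₂ P') (.vcomp Q N₂ Q'))
        (.vcomp (.app P Q) (.app M₂ N₂) (.app P' Q'))
        (.app M₁ N₁) (.app M₃ N₃) B
  | pairLift {Γ P P' Q Q' M₁ M₂ M₃ N₁ N₂ N₃ A B} :
      RdJ X Γ P M₁ M₂ A → RdJ X Γ P' M₂ M₃ A →
      RdJ X Γ Q N₁ N₂ B → RdJ X Γ Q' N₂ N₃ B →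
      PEq X Γ (.pair (.vcomp P M₂ P') (.vcomp Q N₂ Q'))
        (.vcomp (.pair P Q) (.pair M₂ N₂) (.pair P' Q'))
        (.pair M₁ N₁) (.pair M₃ N₃) (.prod A B)
  | fstLift {Γ P Q M₁ M₂ M₃ A B} : RdJ X Γ P M₁ M₂ (.prod A B) →
      RdJ X Γ Q M₂ M₃ (.prod A B) →
      PEq X Γ (.fst (.vcomp P M₂ Q)) (.vcomp (.fst P) (.fst M₂) (.fst Q))
        (.fst M₁) (.fst M₃) A
  | sndLift {Γ P Q M₁ M₂ M₃ A B} : RdJ X Γ P M₁ M₂ (.prod A B) →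
      RdJ X Γ Q M₂ M₃ (.prod A B) →
      PEq X Γ (.snd (.vcomp P M₂ Q)) (.vcomp (.snd P) (.snd M₂) (.snd Q))
        (.snd M₁) (.snd M₃) B
  -- endpoints are βη-classes
  | conv {Γ P Q M N M' N' A} : PEq X Γ P Q M N A → Beq X.sig Γ M M' A →
      Beq X.sig Γ N N' A → PEq X Γ P Q M' N' A
/-- The rules of the 2-signature `L X`: reductions over `X` together with
their boundary (which the paper takes modulo permutation equivalence). -/
structure LRule (X : Sig2 S) : Type where
  ctx : List (Ty S)
  red : Rd X.sig X.Rule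
  src : Tm X.sig
  tgt : Tm X.sig
  ty : Ty S

/-- The 2-signature `L X`: same sorts and operations as `X`, and with
reduction rules the reductions over `X`. -/
def LSig (X : Sig2 S) : Sig2 S where
  sig := X.sig
  Rule := LRule X
  ruleCtx := LRule.ctx
  ruleTy := LRule.ty
  lhs := LRule.src
  rhs := LRule.tgt

/-- Source endpoint of a raw reduction. -/
def srcRd (X : Sig2 S) : Rd X.sig X.Rule → Tm X.sig
  | .var n => .var n
  | .unit => .unit
  | .pair P Q => .pair (srcRd X P) (srcRd X Q)
  | .fst P => .fst (srcRd X P)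
  | .snd P => .snd (srcRd X P)
  | .lam A P => .lam A (srcRd X P)
  | .app P Q => .app (srcRd X P) (srcRd X Q)
  | .const c a => .const c (fun i => srcRd X (a i))
  | .rule r a => (X.lhs r).sub (fun i => srcRd X (a i))
  | .vcomp P _ _ => srcRd X P

/-- Target endpoint of a raw reduction. -/
def tgtRd (X : Sig2 S) : Rd X.sig X.Rule → Tm X.sig
  | .var n => .var n
  | .unit => .unit
  | .pair P Q => .pair (tgtRd X P) (tgtRd X Q)
  | .fst P => .fst (tgtRd X P)
  | .snd P => .snd (tgtRd X P)
  | .lam A P => .lam A (tgtRd X P)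
  | .app P Q => .app (tgtRd X P) (tgtRd X Q)
  | .const c a => .const c (fun i => tgtRd X (a i))
  | .rule r a => (X.rhs r).sub (fun i => tgtRd X (a i))
  | .vcomp _ _ Q => tgtRd X Q

/-- The multiplication `μ_X : L (L X) → L X` on reductions: a rule
application `R⟨P₁,…,Pₙ⟩` is interpreted as the substitution `R[μP₁,…,μPₙ]`,
and `μ` commutes with all the other constructors. -/
def mu (X : Sig2 S) : Rd X.sig (LRule X) → Rd X.sig X.Rule
  | .var n => .var n
  | .unit => .unit
  | .pair P Q => .pair (mu X P) (mu X Q)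
  | .fst P => .fst (mu X P)
  | .snd P => .snd (mu X P)
  | .lam A P => .lam A (mu X P)
  | .app P Q => .app (mu X P) (mu X Q)
  | .const c a => .const c (fun i => mu X (a i))
  | .rule Rr a => rdSub Rr.red (fun i => srcRd X (mu X (a i))) Rr.tgt (fun i => mu X (a i))
  | .vcomp P M Q => .vcomp (mu X P) M (mu X Q)

/-- The unit `η` on reductions: `r ↦ r⟨x₁,…,xₙ⟩`. -/
def etaRd (X : Sig2 S) (r : X.Rule) : Rd X.sig X.Rule :=
  .rule r (fun i => .var i)

/-- The unit `η_X : X → L X` on rules. -/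
def etaRule (X : Sig2 S) (r : X.Rule) : LRule X :=
  ⟨X.ruleCtx r, etaRd X r, X.lhs r, X.rhs r, X.ruleTy r⟩

/-- The rule component of `μ_X : L (L X) → L X`. -/
def muRule (X : Sig2 S) (R₀ : LRule (LSig X)) : LRule X :=
  ⟨R₀.ctx, mu X R₀.red, R₀.src, R₀.tgt, R₀.ty⟩


/-! Each whiskered composite in the statement is `h (L h T)` for an explicit reduction `T`
over `L X`, so the algebra law turns it into `h (μ T)`, where `μ T` is a reduction over `X`
computed symbolically. Up to identity laws, `μ T` is `β⟨M⟩ ; N'[α]` (resp. `N[α] ; β⟨M'⟩`),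
and the lifting rules of permutation equivalence identify both with `β⟨α⟩`; `h` identifies
permutation-equivalent reductions. -/

namespace Tm

variable {Sg : Sig1 S}

lemma liftRen_comp (f g : ℕ → ℕ) :
    (fun n => liftRen g (liftRen f n)) = liftRen (fun n => g (f n)) := by
  funext n; cases n <;> rfl

lemma ren_ren (M : Tm Sg) (f g : ℕ → ℕ) :
    (M.ren f).ren g = M.ren (fun n => g (f n)) := by
  induction M generalizing f g <;> simp [ren, liftRen_comp, *]

lemma liftSub_liftRen (σ : ℕ → Tm Sg) (f : ℕ → ℕ) :
    (fun n => liftSub σ (liftRen f n)) = liftSub (fun n => σ (f n)) := by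
  funext n; cases n <;> rfl

lemma sub_ren (M : Tm Sg) (f : ℕ → ℕ) (σ : ℕ → Tm Sg) :
    (M.ren f).sub σ = M.sub (fun n => σ (f n)) := by
  induction M generalizing f σ <;> simp [ren, sub, liftSub_liftRen, *]

lemma liftSub_ren (σ : ℕ → Tm Sg) (f : ℕ → ℕ) :
    (fun n => (liftSub σ n).ren (liftRen f)) = liftSub (fun n => (σ n).ren f) := by
  funext n; cases n with
  | zero => rfl
  | succ n => simp only [liftSub, ren_ren]; rfl

lemma ren_sub (M : Tm Sg) (σ : ℕ → Tm Sg) (f : ℕ → ℕ) :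
    (M.sub σ).ren f = M.sub (fun n => (σ n).ren f) := by
  induction M generalizing σ f <;> simp [ren, sub, liftSub_ren, *]

lemma liftSub_var : liftSub (var : ℕ → Tm Sg) = var := by
  funext n; cases n <;> rfl

@[simp] lemma sub_var (M : Tm Sg) : M.sub var = M := by
  induction M <;> simp [sub, liftSub_var, *]

end Tm

section Whiskering

variable {Sg : Sig1 S} {R : Type}

lemma Rd.liftRd_var : Rd.liftRd (fun i => (Rd.var i : Rd Sg R)) = fun i => Rd.var i := by
  funext n; cases n <;> rfl

@[simp] lemma rw_var (P : Rd Sg R) : rw Tm.var P = P := by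
  induction P <;> simp [rw, Rd.toRd, Tm.liftSub_var, *]

@[simp] lemma lw_var (M : Tm Sg) : lw (fun i => (Rd.var i : Rd Sg R)) M = Rd.toRd M := by
  induction M <;> simp [lw, Rd.toRd, Rd.liftRd_var, *]

lemma rw_toRd (σ : ℕ → Tm Sg) (M : Tm Sg) :
    rw σ (Rd.toRd M) = (Rd.toRd (M.sub σ) : Rd Sg R) := by
  induction M generalizing σ <;> simp [rw, Tm.sub, Rd.toRd, *]

end Whiskering

def IsCtxRenaming (Γ Δ : List (Ty S)) (f : ℕ → ℕ) : Prop :=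
  ∀ n (hn : n < Γ.length), ∃ h : f n < Δ.length, Δ.get ⟨f n, h⟩ = Γ.get ⟨n, hn⟩

namespace IsCtxRenaming

variable {Γ Δ : List (Ty S)} {f : ℕ → ℕ}

lemma liftRen (hf : IsCtxRenaming Γ Δ f) (A : Ty S) :
    IsCtxRenaming (A :: Γ) (A :: Δ) (Tm.liftRen f) := by
  rintro (_ | n) hn
  · exact ⟨Nat.succ_pos _, rfl⟩
  · obtain ⟨h, he⟩ := hf n (Nat.lt_of_succ_lt_succ hn)
    exact ⟨Nat.succ_lt_succ h, he⟩

lemma succ (Γ : List (Ty S)) (A : Ty S) : IsCtxRenaming Γ (A :: Γ) Nat.succ :=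
  fun _ hn => ⟨Nat.succ_lt_succ hn, rfl⟩

end IsCtxRenaming

section Typing

variable {Sg : Sig1 S} {Γ Δ : List (Ty S)} {f : ℕ → ℕ}

lemma HasTy.ren {M : Tm Sg} {A : Ty S} (hM : HasTy Sg Γ M A) (hf : IsCtxRenaming Γ Δ f) :
    HasTy Sg Δ (M.ren f) A := by
  induction hM generalizing Δ f with
  | var hn =>
    obtain ⟨h, he⟩ := hf _ hn
    exact he ▸ HasTy.var h
  | unit => exact .unit
  | pair _ _ ih₁ ih₂ => exact .pair (ih₁ hf) (ih₂ hf)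
  | fst _ ih => exact .fst (ih hf)
  | snd _ ih => exact .snd (ih hf)
  | lam _ ih => exact .lam (ih (hf.liftRen _))
  | app _ _ ih₁ ih₂ => exact .app (ih₁ hf) (ih₂ hf)
  | const _ ih => exact .const fun i hi => ih i hi hf

lemma Beq.ren {M N : Tm Sg} {A : Ty S} (hMN : Beq Sg Γ M N A) (hf : IsCtxRenaming Γ Δ f) :
    Beq Sg Δ (M.ren f) (N.ren f) A := by
  induction hMN generalizing Δ f with
  | refl hM => exact .refl (hM.ren hf)
  | symm _ ih => exact .symm (ih hf)
  | trans _ _ ih₁ ih₂ => exact .trans (ih₁ hf) (ih₂ hf)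
  | pairCong _ _ ih₁ ih₂ => exact .pairCong (ih₁ hf) (ih₂ hf)
  | fstCong _ ih => exact .fstCong (ih hf)
  | sndCong _ ih => exact .sndCong (ih hf)
  | lamCong _ ih => exact .lamCong (ih (hf.liftRen _))
  | appCong _ _ ih₁ ih₂ => exact .appCong (ih₁ hf) (ih₂ hf)
  | constCong _ ih => exact .constCong fun i hi => ih i hi hf
  | @beta _ M₀ N₀ _ _ hM hN =>
    have e : (M₀.sub (Tm.cons N₀ Tm.var)).ren f
        = (M₀.ren (Tm.liftRen f)).sub (Tm.cons (N₀.ren f) Tm.var) := by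
      rw [Tm.ren_sub, Tm.sub_ren]
      congr 1
      funext n; cases n <;> rfl
    rw [Tm.ren, e]
    exact .beta (hM.ren (hf.liftRen _)) (hN.ren hf)
  | @eta _ M₀ _ _ hM =>
    have e : (M₀.ren Nat.succ).ren (Tm.liftRen f) = (M₀.ren f).ren Nat.succ := by
      rw [Tm.ren_ren, Tm.ren_ren]; rfl
    rw [Tm.ren, Tm.ren, e]
    exact .eta (hM.ren hf)
  | prodBeta1 hM hN => exact .prodBeta1 (hM.ren hf) (hN.ren hf)
  | prodBeta2 hM hN => exact .prodBeta2 (hM.ren hf) (hN.ren hf)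
  | prodEta hM => exact .prodEta (hM.ren hf)
  | unitEta hM => exact .unitEta (hM.ren hf)

end Typing

namespace RdJ

variable {X : Sig2 S} {Γ Δ : List (Ty S)}

lemma ren {P : Rd X.sig X.Rule} {M N : Tm X.sig} {A : Ty S} (hP : RdJ X Γ P M N A)
    {f : ℕ → ℕ} (hf : IsCtxRenaming Γ Δ f) : RdJ X Δ (P.ren f) (M.ren f) (N.ren f) A := by
  induction hP generalizing Δ f with
  | rule _ ih =>
    rw [Tm.ren_sub, Tm.ren_sub]
    exact .rule fun i hi => ih i hi hf
  | vcomp _ _ ih₁ ih₂ => exact .vcomp (ih₁ hf) (ih₂ hf)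
  | var hn =>
    obtain ⟨h, he⟩ := hf _ hn
    exact he ▸ RdJ.var h
  | unit => exact .unit
  | const _ ih => exact .const fun i hi => ih i hi hf
  | lam _ ih => exact .lam (ih (hf.liftRen _))
  | app _ _ ih₁ ih₂ => exact .app (ih₁ hf) (ih₂ hf)
  | pair _ _ ih₁ ih₂ => exact .pair (ih₁ hf) (ih₂ hf)
  | fst _ ih => exact .fst (ih hf)
  | snd _ ih => exact .snd (ih hf)
  | conv _ hM hN ih => exact .conv (ih hf) (hM.ren hf) (hN.ren hf)

lemma toRd {M : Tm X.sig} {A : Ty S} (hM : HasTy X.sig Γ M A) : RdJ X Γ (Rd.toRd M) M M A := by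
  induction hM with
  | var hn => exact .var hn
  | unit => exact .unit
  | pair _ _ ih₁ ih₂ => exact .pair ih₁ ih₂
  | fst _ ih => exact .fst ih
  | snd _ ih => exact .snd ih
  | lam _ ih => exact .lam ih
  | app _ _ ih₁ ih₂ => exact .app ih₁ ih₂
  | const _ ih => exact .const ih

lemma lw {M : Tm X.sig} {C : Ty S} (hM : HasTy X.sig Δ M C) {Q : ℕ → Rd X.sig X.Rule}
    {Ms Ns : ℕ → Tm X.sig}
    (hQ : ∀ i (hi : i < Δ.length), RdJ X Γ (Q i) (Ms i) (Ns i) (Δ.get ⟨i, hi⟩)) :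
    RdJ X Γ (lw Q M) (M.sub Ms) (M.sub Ns) C := by
  induction hM generalizing Γ Q Ms Ns with
  | var hn => exact hQ _ hn
  | unit => exact .unit
  | pair _ _ ih₁ ih₂ => exact .pair (ih₁ hQ) (ih₂ hQ)
  | fst _ ih => exact .fst (ih hQ)
  | snd _ ih => exact .snd (ih hQ)
  | lam _ ih =>
    refine .lam (ih ?_)
    rintro (_ | n) hn
    · exact .var (by simp)
    · exact (hQ n (Nat.lt_of_succ_lt_succ hn)).ren (IsCtxRenaming.succ _ _)
  | app _ _ ih₁ ih₂ => exact .app (ih₁ hQ) (ih₂ hQ)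
  | const _ ih => exact .const fun i hi => ih i hi hQ

lemma etaRd (r : X.Rule) :
    RdJ X (X.ruleCtx r) (etaRd X r) (X.lhs r) (X.rhs r) (X.ruleTy r) := by
  simpa [_root_.etaRd] using
    RdJ.rule (r := r) (Ms := Tm.var) (Ns := Tm.var) fun _ hi => RdJ.var (X := X) hi

end RdJ

namespace PEq

variable {X : Sig2 S} {Γ : List (Ty S)} {r : X.Rule} {Q : ℕ → Rd X.sig X.Rule}
  {N₁ N₂ : ℕ → Tm X.sig}

lemma rule_eq_rule_toRd_vcomp_lw
    (hN₁ : ∀ i (hi : i < (X.ruleCtx r).length),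
      HasTy X.sig Γ (N₁ i) ((X.ruleCtx r).get ⟨i, hi⟩))
    (hQ : ∀ i (hi : i < (X.ruleCtx r).length),
      RdJ X Γ (Q i) (N₁ i) (N₂ i) ((X.ruleCtx r).get ⟨i, hi⟩)) :
    PEq X Γ (.rule r Q)
      (.vcomp (.rule r fun i => Rd.toRd (N₁ i)) ((X.rhs r).sub N₁) (lw Q (X.rhs r)))
      ((X.lhs r).sub N₁) ((X.rhs r).sub N₂) (X.ruleTy r) :=
  (ruleCong fun i hi => (unitL (hQ i hi)).symm).trans
    (ruleLift2 (fun i hi => .toRd (hN₁ i hi)) hQ)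

lemma rule_eq_lw_vcomp_rule_toRd
    (hN₂ : ∀ i (hi : i < (X.ruleCtx r).length),
      HasTy X.sig Γ (N₂ i) ((X.ruleCtx r).get ⟨i, hi⟩))
    (hQ : ∀ i (hi : i < (X.ruleCtx r).length),
      RdJ X Γ (Q i) (N₁ i) (N₂ i) ((X.ruleCtx r).get ⟨i, hi⟩)) :
    PEq X Γ (.rule r Q)
      (.vcomp (lw Q (X.lhs r)) ((X.lhs r).sub N₂) (.rule r fun i => Rd.toRd (N₂ i)))
      ((X.lhs r).sub N₁) ((X.rhs r).sub N₂) (X.ruleTy r) :=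
  (ruleCong fun i hi => (unitR (hQ i hi)).symm).trans
    (ruleLift1 hQ (fun i hi => .toRd (hN₂ i hi)))

end PEq

/-- `μ` sends `η r` to this reduction rather than to `η r` itself. -/
def etaRdVcompId (X : Sig2 S) (r : X.Rule) : Rd X.sig X.Rule :=
  .vcomp (etaRd X r) (X.rhs r) (Rd.toRd (X.rhs r))

section Multiplication

variable {X : Sig2 S}

lemma mu_rule_var (R₀ : LRule X) :
    mu X (.rule R₀ fun i => .var i) = .vcomp R₀.red R₀.tgt (Rd.toRd R₀.tgt) := by
  simp [mu, rdSub, srcRd]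

lemma srcRd_etaRdVcompId (r : X.Rule) : srcRd X (etaRdVcompId X r) = X.lhs r := by
  simp [etaRdVcompId, etaRd, srcRd]

lemma mu_rule_etaRule (R₀ : LRule X) (ρ : ℕ → X.Rule) :
    mu X (.rule R₀ fun i => .rule (etaRule X (ρ i)) fun j => .var j) =
      rdSub R₀.red (fun i => X.lhs (ρ i)) R₀.tgt (fun i => etaRdVcompId X (ρ i)) := by
  have hη (r : X.Rule) : mu X (.rule (etaRule X r) fun j => .var j) = etaRdVcompId X r :=
    mu_rule_var _
  rw [mu]
  simp only [hη, srcRd_etaRdVcompId]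

end Multiplication

lemma RdJ.etaRdVcompId {X : Sig2 S} {r : X.Rule}
    (hr : HasTy X.sig (X.ruleCtx r) (X.rhs r) (X.ruleTy r)) :
    RdJ X (X.ruleCtx r) (etaRdVcompId X r) (X.lhs r) (X.rhs r) (X.ruleTy r) :=
  .vcomp (.etaRd r) (.toRd hr)

lemma PEq.etaRdVcompId (X : Sig2 S) (r : X.Rule) :
    PEq X (X.ruleCtx r) (etaRdVcompId X r) (etaRd X r) (X.lhs r) (X.rhs r) (X.ruleTy r) :=
  .unitR (.etaRd r)

/-- `ρ` is a 2-cell `lhs ∘ ρ ⟶ rhs ∘ ρ` between arrows `Γ → Δ`, given componentwise. -/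
def IsRuleTuple (X : Sig2 S) (Γ Δ : List (Ty S)) (ρ : ℕ → X.Rule) : Prop :=
  ∀ i (hi : i < Δ.length), X.ruleCtx (ρ i) = Γ ∧ X.ruleTy (ρ i) = Δ.get ⟨i, hi⟩

namespace IsRuleTuple

variable {X : Sig2 S} {Γ Δ : List (Ty S)} {ρ : ℕ → X.Rule}

lemma hasTy_lhs
    (hwt : ∀ r : X.Rule, HasTy X.sig (X.ruleCtx r) (X.lhs r) (X.ruleTy r) ∧
      HasTy X.sig (X.ruleCtx r) (X.rhs r) (X.ruleTy r))
    (hρ : IsRuleTuple X Γ Δ ρ) (i : ℕ) (hi : i < Δ.length) :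
    HasTy X.sig Γ (X.lhs (ρ i)) (Δ.get ⟨i, hi⟩) := by
  obtain ⟨hc, ht⟩ := hρ i hi
  exact hc ▸ ht ▸ (hwt (ρ i)).1

lemma hasTy_rhs
    (hwt : ∀ r : X.Rule, HasTy X.sig (X.ruleCtx r) (X.lhs r) (X.ruleTy r) ∧
      HasTy X.sig (X.ruleCtx r) (X.rhs r) (X.ruleTy r))
    (hρ : IsRuleTuple X Γ Δ ρ) (i : ℕ) (hi : i < Δ.length) :
    HasTy X.sig Γ (X.rhs (ρ i)) (Δ.get ⟨i, hi⟩) := by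
  obtain ⟨hc, ht⟩ := hρ i hi
  exact hc ▸ ht ▸ (hwt (ρ i)).2

lemma rdJ_etaRdVcompId
    (hwt : ∀ r : X.Rule, HasTy X.sig (X.ruleCtx r) (X.lhs r) (X.ruleTy r) ∧
      HasTy X.sig (X.ruleCtx r) (X.rhs r) (X.ruleTy r))
    (hρ : IsRuleTuple X Γ Δ ρ) (i : ℕ) (hi : i < Δ.length) :
    RdJ X Γ (etaRdVcompId X (ρ i)) (X.lhs (ρ i)) (X.rhs (ρ i)) (Δ.get ⟨i, hi⟩) := by
  obtain ⟨hc, ht⟩ := hρ i hi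
  exact hc ▸ ht ▸ .etaRdVcompId (hwt (ρ i)).2

lemma pEq_etaRdVcompId (hρ : IsRuleTuple X Γ Δ ρ) (i : ℕ) (hi : i < Δ.length) :
    PEq X Γ (etaRdVcompId X (ρ i)) (etaRd X (ρ i)) (X.lhs (ρ i)) (X.rhs (ρ i))
      (Δ.get ⟨i, hi⟩) := by
  obtain ⟨hc, ht⟩ := hρ i hi
  exact hc ▸ ht ▸ .etaRdVcompId X (ρ i)

end IsRuleTuple

section Algebra

variable {X : Sig2 S} (h : List (Ty S) → Rd X.sig X.Rule → X.Rule)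
  (hPEq : ∀ Γ P Q M N A, PEq X Γ P Q M N A → h Γ P = h Γ Q)
  (hAlg : ∀ Γ (T : Rd X.sig (LRule X)),
    h Γ (Rd.mapRule (fun R₀ => h R₀.ctx R₀.red) T) = h Γ (mu X T))
  (hEta : ∀ r : X.Rule, h (X.ruleCtx r) (etaRd X r) = r)
  (hwt : ∀ r : X.Rule, HasTy X.sig (X.ruleCtx r) (X.lhs r) (X.ruleTy r) ∧
    HasTy X.sig (X.ruleCtx r) (X.rhs r) (X.ruleTy r))

include hPEq hAlg in
lemma h_vcomp_etaRd
    {Γ : List (Ty S)} {P Q : Rd X.sig X.Rule} {M₁ M₂ M₃ : Tm X.sig} {A : Ty S}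
    (hP : RdJ X Γ P M₁ M₂ A) (hQ : RdJ X Γ Q M₂ M₃ A) :
    h Γ (.vcomp (etaRd X (h Γ P)) M₂ (etaRd X (h Γ Q))) = h Γ (.vcomp P M₂ Q) := by
  let T : Rd X.sig (LRule X) :=
    .vcomp (.rule ⟨Γ, P, M₁, M₂, A⟩ fun i => .var i) M₂
      (.rule ⟨Γ, Q, M₂, M₃, A⟩ fun i => .var i)
  have hmu : mu X T = .vcomp (.vcomp P M₂ (Rd.toRd M₂)) M₂ (.vcomp Q M₃ (Rd.toRd M₃)) := by
    rw [mu, mu_rule_var, mu_rule_var]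
  calc _ = h Γ (mu X T) := hAlg Γ T
    _ = _ := hPEq _ _ _ _ _ _ (by rw [hmu]; exact .vcompCong (.unitR hP) (.unitR hQ))

include hPEq hAlg hEta in
lemma h_rule_h_toRd_etaRd
    {Γ Δ : List (Ty S)} {N N' : Tm X.sig} {A : Ty S} {ρ : ℕ → X.Rule}
    (hlw : RdJ X Γ (lw (fun i => etaRdVcompId X (ρ i)) N) (N.sub fun i => X.lhs (ρ i)) N' A) :
    h Γ (.rule (h Δ (Rd.toRd N)) fun i => etaRd X (ρ i)) =
      h Γ (lw (fun i => etaRdVcompId X (ρ i)) N) := by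
  let T : Rd X.sig (LRule X) :=
    .rule ⟨Δ, Rd.toRd N, N, N, A⟩ fun i => .rule (etaRule X (ρ i)) fun j => .var j
  have hmap : Rd.mapRule (fun R₀ => h R₀.ctx R₀.red) T =
      .rule (h Δ (Rd.toRd N)) fun i => etaRd X (ρ i) := by
    simp only [T, Rd.mapRule, etaRule, hEta]
    rfl
  have hmu : mu X T = .vcomp (Rd.toRd (N.sub fun i => X.lhs (ρ i)))
      (N.sub fun i => X.lhs (ρ i)) (lw (fun i => etaRdVcompId X (ρ i)) N) := by
    rw [mu_rule_etaRule, rdSub, rw_toRd]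
  rw [← hmap, hAlg, hmu]
  exact hPEq _ _ _ _ _ _ (.unitL hlw)

variable {Γ : List (Ty S)} (β : X.Rule) {ρ : ℕ → X.Rule} (hρ : IsRuleTuple X Γ (X.ruleCtx β) ρ)
include hPEq hAlg hEta hwt hρ

lemma h_vcomp_whiskerLeft_whiskerRight :
    h Γ (.vcomp (etaRd X (h Γ (.rule β fun i => Rd.toRd (X.lhs (ρ i)))))
        ((X.rhs β).sub fun i => X.lhs (ρ i))
        (etaRd X (h Γ (.rule (h (X.ruleCtx β) (Rd.toRd (X.rhs β))) fun i => etaRd X (ρ i))))) =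
      h Γ (.rule β fun i => etaRd X (ρ i)) := by
  have hlw := RdJ.lw (hwt β).2 (hρ.rdJ_etaRdVcompId hwt)
  have hwhisker : RdJ X Γ (.rule β fun i => Rd.toRd (X.lhs (ρ i)))
      ((X.lhs β).sub fun i => X.lhs (ρ i)) ((X.rhs β).sub fun i => X.lhs (ρ i)) (X.ruleTy β) :=
    .rule fun i hi => .toRd (hρ.hasTy_lhs hwt i hi)
  rw [h_rule_h_toRd_etaRd h hPEq hAlg hEta hlw, h_vcomp_etaRd h hPEq hAlg hwhisker hlw]
  exact hPEq _ _ _ _ _ _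
    ((PEq.rule_eq_rule_toRd_vcomp_lw (hρ.hasTy_lhs hwt) (hρ.rdJ_etaRdVcompId hwt)).symm.trans
      (.ruleCong hρ.pEq_etaRdVcompId))

lemma h_vcomp_whiskerRight_whiskerLeft :
    h Γ (.vcomp
        (etaRd X (h Γ (.rule (h (X.ruleCtx β) (Rd.toRd (X.lhs β))) fun i => etaRd X (ρ i))))
        ((X.lhs β).sub fun i => X.rhs (ρ i))
        (etaRd X (h Γ (.rule β fun i => Rd.toRd (X.rhs (ρ i)))))) =
      h Γ (.rule β fun i => etaRd X (ρ i)) := by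
  have hlw := RdJ.lw (hwt β).1 (hρ.rdJ_etaRdVcompId hwt)
  have hwhisker : RdJ X Γ (.rule β fun i => Rd.toRd (X.rhs (ρ i)))
      ((X.lhs β).sub fun i => X.rhs (ρ i)) ((X.rhs β).sub fun i => X.rhs (ρ i)) (X.ruleTy β) :=
    .rule fun i hi => .toRd (hρ.hasTy_rhs hwt i hi)
  rw [h_rule_h_toRd_etaRd h hPEq hAlg hEta hlw, h_vcomp_etaRd h hPEq hAlg hlw hwhisker]
  exact hPEq _ _ _ _ _ _
    ((PEq.rule_eq_lw_vcomp_rule_toRd (hρ.hasTy_rhs hwt) (hρ.rdJ_etaRdVcompId hwt)).symm.trans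
      (.ruleCong hρ.pEq_etaRdVcompId))

end Algebra

theorem horizontal_composition_via_whiskering_general (X : Sig2 S)
    (h : List (Ty S) → Rd X.sig X.Rule → X.Rule)
    -- h respects permutation equivalence
    (hPEq : ∀ Γ P Q M N A, PEq X Γ P Q M N A → h Γ P = h Γ Q)
    -- the algebra law h ∘ L(h) = h ∘ μ
    (hAlg : ∀ Γ (T : Rd X.sig (LRule X)),
      h Γ (Rd.mapRule (fun R₀ => h R₀.ctx R₀.red) T) = h Γ (mu X T))
    -- the algebra law h ∘ η = id
    (hEta : ∀ r : X.Rule, h (X.ruleCtx r) (etaRd X r) = r)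
    -- rules of X are well-typed
    (hwt : ∀ r : X.Rule, HasTy X.sig (X.ruleCtx r) (X.lhs r) (X.ruleTy r) ∧
      HasTy X.sig (X.ruleCtx r) (X.rhs r) (X.ruleTy r))
    -- a 2-cell α : M ⟶ M' : A → B
    {A B : Ty S} (α : X.Rule) (M M' : Tm X.sig)
    (hαc : X.ruleCtx α = [A]) (hαt : X.ruleTy α = B)
    (hαl : X.lhs α = M) (hαr : X.rhs α = M')
    -- a 2-cell β : N ⟶ N' : B → C
    (β : X.Rule) (N N' : Tm X.sig)
    (hβc : X.ruleCtx β = [B])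
    (hβl : X.lhs β = N) (hβr : X.rhs β = N') :
    (h [A] (.vcomp (etaRd X (h [A] (.rule β (fun _ => Rd.toRd M))))
        (N'.sub (fun _ => M))
        (etaRd X (h [A] (.rule (h [B] (Rd.toRd N')) (fun _ => etaRd X α))))) =
      h [A] (.rule β (fun _ => etaRd X α))) ∧
    (h [A] (.rule β (fun _ => etaRd X α)) =
      h [A] (.vcomp (etaRd X (h [A] (.rule (h [B] (Rd.toRd N)) (fun _ => etaRd X α))))
        (N.sub (fun _ => M'))
        (etaRd X (h [A] (.rule β (fun _ => Rd.toRd M')))))) := by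
  subst hαl hαr hβl hβr hαt
  have hρ : IsRuleTuple X [A] (X.ruleCtx β) fun _ => α := fun i hi =>
    ⟨hαc, by simp [hβc]⟩
  rw [← hβc]
  exact ⟨h_vcomp_whiskerLeft_whiskerRight h hPEq hAlg hEta hwt β hρ,
    (h_vcomp_whiskerRight_whiskerLeft h hPEq hAlg hEta hwt β hρ).symm⟩

/-- In `F(X,h)`, horizontal composition decomposes via whiskering in both
orders: for 2-cells `α : M ⟶ M' : A → B` and `β : N ⟶ N' : B → C`,
`(β ∘ id_M) ; (id_{N'} ∘ α) = β ∘ α = (id_N ∘ α) ; (β ∘ id_{M'})`. -/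
theorem horizontal_composition_via_whiskering (X : Sig2 S)
    (h : List (Ty S) → Rd X.sig X.Rule → X.Rule)
    -- h respects permutation equivalence
    (hPEq : ∀ Γ P Q M N A, PEq X Γ P Q M N A → h Γ P = h Γ Q)
    -- the algebra law h ∘ L(h) = h ∘ μ
    (hAlg : ∀ Γ (T : Rd X.sig (LRule X)),
      h Γ (Rd.mapRule (fun R₀ => h R₀.ctx R₀.red) T) = h Γ (mu X T))
    -- the algebra law h ∘ η = id
    (hEta : ∀ r : X.Rule, h (X.ruleCtx r) (etaRd X r) = r)
    -- rules of X are well-typed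
    (hwt : ∀ r : X.Rule, HasTy X.sig (X.ruleCtx r) (X.lhs r) (X.ruleTy r) ∧
      HasTy X.sig (X.ruleCtx r) (X.rhs r) (X.ruleTy r))
    -- a 2-cell α : M ⟶ M' : A → B
    {A B C : Ty S} (α : X.Rule) (M M' : Tm X.sig)
    (hαc : X.ruleCtx α = [A]) (hαt : X.ruleTy α = B)
    (hαl : X.lhs α = M) (hαr : X.rhs α = M')
    -- a 2-cell β : N ⟶ N' : B → C
    (β : X.Rule) (N N' : Tm X.sig)
    (hβc : X.ruleCtx β = [B]) (hβt : X.ruleTy β = C)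
    (hβl : X.lhs β = N) (hβr : X.rhs β = N') :
    (h [A] (.vcomp (etaRd X (h [A] (.rule β (fun _ => Rd.toRd M))))
        (N'.sub (fun _ => M))
        (etaRd X (h [A] (.rule (h [B] (Rd.toRd N')) (fun _ => etaRd X α))))) =
      h [A] (.rule β (fun _ => etaRd X α))) ∧
    (h [A] (.rule β (fun _ => etaRd X α)) =
      h [A] (.vcomp (etaRd X (h [A] (.rule (h [B] (Rd.toRd N)) (fun _ => etaRd X α))))
        (N.sub (fun _ => M'))
        (etaRd X (h [A] (.rule β (fun _ => Rd.toRd M')))))) :=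
  horizontal_composition_via_whiskering_general X h hPEq hAlg hEta hwt α M M' hαc hαt hαl hαr β N N'
    hβc hβl hβr
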